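/- arXiv:1910.11166 — 2 statements merged into one kernel-verified Lean document; each statement's English description precedes it below -/
import Mathlib

section
/- Suppose two jump points s₁ < s₂ are added into one open interval I_{α₀} = (t_{α₀}, t_{α₀+1}), producing subintervals I¹ = (t_{α₀},s₁), I² = (s₁,s₂), I³ = (s₂,t_{α₀+1}), I⁴ = {s₁}, I⁵ = {s₂}. Let σ be a bijection of ℝ with both 𝒜 and 𝒜_S invariant under σ and σ⁻¹, and assume σ(I¹) = I², σ(I²) = I³, σ(I³) = I¹, σ(I⁴) = I⁵, σ(I⁵) = I⁴. Then for every n ∈ ℤ: Sepⁿ_{𝒜_S}(ℝ) = Sepⁿ_𝒜(ℝ) ∪ (I⁴ ∪ I⁵) if n is odd and 3 ∣ n; Sepⁿ_{𝒜_S}(ℝ) = Sepⁿ_𝒜(ℝ) ∪ (I¹ ∪ I² ∪ I³) ∪ (I⁴ ∪ I⁵ if n is odd) if 3 ∤ n; and Sepⁿ_{𝒜_S}(ℝ) = Sepⁿ_𝒜(ℝ) if n is even and 3 ∣ n. Consequently 𝒜_S′ = 𝒜′ \ ({Σₙ fₙδⁿ ∈ 𝒜′ : fₙ ≠ 0 on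 I¹ ∪ I² ∪ I³ for some n with 3 ∤ n} ∪ {Σₙ fₙδⁿ ∈ 𝒜′ : f_{2n+1} ≠ 0 on I⁴ ∪ I⁵ for some n}). -/
open scoped Classical

noncomputable section

namespace PaperTRS

/-- The algebra of complex valued functions constant on each set of the family `P`. -/
def partAlg {X J : Type*} (P : J → Set X) : Subalgebra ℂ (X → ℂ) where
  carrier := {h | ∀ i, ∀ x ∈ P i, ∀ y ∈ P i, h x = h y}
  mul_mem' := by
    intro a b ha hb i x hx y hy
    simp only [Pi.mul_apply, ha i x hx y hy, hb i x hx y hy]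
  add_mem' := by
    intro a b ha hb i x hx y hy
    simp only [Pi.add_apply, ha i x hx y hy, hb i x hx y hy]
  algebraMap_mem' := by intro r i x hx y hy; rfl

/-- Piecewise constant functions on `ℝ` whose jumps all lie in the set `T`. -/
def pcAlgOn (T : Set ℝ) : Subalgebra ℂ (ℝ → ℂ) where
  carrier := {h | ∀ x y : ℝ, x ∉ T → y ∉ T →
    (∀ u ∈ T, u ∉ Set.Icc (min x y) (max x y)) → h x = h y}
  mul_mem' := by
    intro a b ha hb x y hx hy hxy
    simp only [Pi.mul_apply, ha x y hx hy hxy, hb x y hx hy hxy]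
  add_mem' := by
    intro a b ha hb x y hx hy hxy
    simp only [Pi.add_apply, ha x y hx hy hxy, hb x y hx hy hxy]
  algebraMap_mem' := by intro r x y _ _ _; rfl

/-- Invariance of an algebra of functions under a self-map of `X`. -/
def AlgInvariant {X : Type*} (A : Subalgebra ℂ (X → ℂ)) (σ : X → X) : Prop :=
  ∀ h ∈ A, (h ∘ σ) ∈ A

/-- `Sep A σ n = {x | ∃ h ∈ A, h x ≠ σ̃ⁿ(h) x}`, where `σ̃ⁿ(h) = h ∘ σ⁻ⁿ`. -/
def Sep {X : Type*} (A : Subalgebra ℂ (X → ℂ)) (σ : Equiv.Perm X) (n : ℤ) : Set X :=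
  {x | ∃ h ∈ A, h x ≠ h ((σ ^ n)⁻¹ x)}

/-- Twisted convolution product on the crossed product `⋊ ℤ`:
`(fₙ δⁿ) * (gₘ δᵐ) = fₙ · σ̃ⁿ(gₘ) · δ^{n+m}` extended bilinearly. -/
def cmul {X : Type*} (σ : Equiv.Perm X) (f g : ℤ →₀ (X → ℂ)) : ℤ →₀ (X → ℂ) :=
  f.sum fun n a => g.sum fun m b =>
    Finsupp.single (n + m) (fun x => a x * b ((σ ^ n)⁻¹ x))

/-- Membership of an element `Σ fₙ δⁿ` in the crossed product of the algebra `B` with `ℤ`. -/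
def InCrossed {X : Type*} (B : Subalgebra ℂ (X → ℂ)) (f : ℤ →₀ (X → ℂ)) : Prop :=
  ∀ n, f n ∈ B

/-- The commutant of `A` inside the crossed product `B ⋊ ℤ` (where `A ⊆ B`). -/
def commutant {X : Type*} (A B : Subalgebra ℂ (X → ℂ)) (σ : Equiv.Perm X) :
    Set (ℤ →₀ (X → ℂ)) :=
  {f | InCrossed B f ∧
    ∀ a ∈ A, cmul σ f (Finsupp.single 0 a) = cmul σ (Finsupp.single 0 a) f}

/-- The jump points `t₁ < ⋯ < t_N` extended by `t₀ = -∞` and `t_{N+1} = +∞`. -/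
def tE (N : ℕ) (t : Fin N → ℝ) (i : ℕ) : EReal :=
  if h : 1 ≤ i ∧ i ≤ N then ((t ⟨i - 1, by omega⟩ : ℝ) : EReal)
  else if i = 0 then ⊥ else ⊤

/-- The open interval `I_i = (t_i, t_{i+1})` for `0 ≤ i ≤ N`. -/
def openPiece (N : ℕ) (t : Fin N → ℝ) (i : ℕ) : Set ℝ :=
  {x : ℝ | tE N t i < (x : EReal) ∧ (x : EReal) < tE N t (i + 1)}

/-- The sets of the partition of `ℝ` determined by the jump points: the open
intervals `I_0, …, I_N` together with the singletons `{t_i}`. -/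
def pieces (N : ℕ) (t : Fin N → ℝ) : Set (Set ℝ) :=
  {P | (∃ i : ℕ, i ≤ N ∧ P = openPiece N t i) ∨ (∃ i : Fin N, P = {t i})}

/-- `C_k`: points `x` such that `k` is the smallest positive integer with `x` and
`σᵏ(x)` in one common set of the partition. -/
def Ck (N : ℕ) (t : Fin N → ℝ) (σ : Equiv.Perm ℝ) (k : ℕ) : Set ℝ :=
  {x | IsLeast {j : ℕ | 0 < j ∧ ∃ P ∈ pieces N t, x ∈ P ∧ (σ ^ j) x ∈ P} k}

end PaperTRS
namespace PaperTRS

/-- With `p` points `s i 0 < ⋯ < s i (p-1)` added in the interval `I_{α i}`, the `j`-th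
open subinterval of the refined partition of `I_{α i}`, for `j = 0, …, p`. -/
def subPiece (N : ℕ) (t : Fin N → ℝ) {k p : ℕ} (α : Fin k → ℕ)
    (s : Fin k → Fin p → ℝ) (i : Fin k) (j : Fin (p + 1)) : Set ℝ :=
  {x : ℝ |
    (if hj : (j : ℕ) = 0 then tE N t (α i)
      else ((s i ⟨(j : ℕ) - 1, by have := j.isLt; omega⟩ : ℝ) : EReal)) < (x : EReal) ∧
    (x : EReal) <
      (if hj : (j : ℕ) = p then tE N t (α i + 1)
        else ((s i ⟨(j : ℕ), by have := j.isLt; omega⟩ : ℝ) : EReal))}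

/-- The sets of the refined partition of the union of the intervals `I_{α i}`: the open
subintervals determined by the added jump points together with the singleton jump points. -/
def cyclePieces (N : ℕ) (t : Fin N → ℝ) {k p : ℕ} (α : Fin k → ℕ)
    (s : Fin k → Fin p → ℝ) : Set (Set ℝ) :=
  {P | (∃ i j, P = subPiece N t α s i j) ∨ (∃ i j, P = ({s i j} : Set ℝ))}

/-- `C̃_r`: points `x` of `⋃ᵢ I_{α i}` such that `r` is the smallest positive integer with
`x` and `σʳ(x)` in one common set of the refined partition. -/
def Ctil (N : ℕ) (t : Fin N → ℝ) (σ : Equiv.Perm ℝ) {k p : ℕ} (α : Fin k → ℕ)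
    (s : Fin k → Fin p → ℝ) (r : ℕ) : Set ℝ :=
  {x | x ∈ ⋃ i, openPiece N t (α i) ∧
    IsLeast {j : ℕ | 0 < j ∧ ∃ P ∈ cyclePieces N t α s, x ∈ P ∧ (σ ^ j) x ∈ P} r}

/-- The cyclic setup: `k` pairwise distinct open intervals `I_{α 0}, …, I_{α (k-1)}` of the
original partition, contained in `C_k` and permuted cyclically by `σ`, with `p` jump points
`s i 0 < ⋯ < s i (p-1)` added into each of them, and both the original algebra `𝒜` and the
refined algebra `𝒜_S` invariant under `σ` and `σ⁻¹`. -/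
def CyclicSetup (N : ℕ) (t : Fin N → ℝ) (σ : Equiv.Perm ℝ) {k p : ℕ} (α : Fin k → ℕ)
    (s : Fin k → Fin p → ℝ) : Prop :=
  0 < k ∧ (∀ i, α i ≤ N) ∧ Function.Injective α ∧
  (∀ i j, s i j ∈ openPiece N t (α i)) ∧ (∀ i, StrictMono (s i)) ∧
  (∀ i : Fin k, ∃ i' : Fin k, ((i' : ℕ) = ((i : ℕ) + 1) % k) ∧
    σ '' openPiece N t (α i) = openPiece N t (α i')) ∧
  (∀ i, openPiece N t (α i) ⊆ Ck N t σ k) ∧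
  AlgInvariant (pcAlgOn (Set.range t)) σ ∧
  AlgInvariant (pcAlgOn (Set.range t)) σ.symm ∧
  AlgInvariant (pcAlgOn (Set.range t ∪ ⋃ i, Set.range (s i))) σ ∧
  AlgInvariant (pcAlgOn (Set.range t ∪ ⋃ i, Set.range (s i))) σ.symm

/-- `C_k` for the partition `P` of a general set `X`. -/
def CkGen {X ι : Type*} (P : ι → Set X) (σ : Equiv.Perm X) (k : ℕ) : Set X :=
  {x | IsLeast {j : ℕ | 0 < j ∧ ∃ i, x ∈ P i ∧ (σ ^ j) x ∈ P i} k}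

/-- `C̃_r` relative to a family `Q` of refined pieces inside the subset `base` of `X`. -/
def CtilGen {X ι : Type*} (σ : Equiv.Perm X) (Q : ι → Set X) (base : Set X) (r : ℕ) :
    Set X :=
  {x | x ∈ base ∧ IsLeast {j : ℕ | 0 < j ∧ ∃ i, x ∈ Q i ∧ (σ ^ j) x ∈ Q i} r}

/-- `C_∞`: points that never return to the partition set they lie in. -/
def Cinf {X ι : Type*} (P : ι → Set X) (σ : Equiv.Perm X) : Set X :=
  {x | ∀ k : ℕ, 0 < k → ¬∃ i, x ∈ P i ∧ (σ ^ k) x ∈ P i}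

end PaperTRS
namespace PaperTRS

/-!
The functions in `pcAlgOn T` fail to separate `x ≠ y` exactly when no point of `T` lies in
`[x, y]` (`SameCell`), and a point of `T ∪ S` lies there iff a point of `T` or one of `S` does.
Hence `Sep` for `𝒜_S` is `Sep` for `𝒜` together with `Sep` for the two new points alone.
Off `I_{α₀}` the new points separate nothing new, since `I_{α₀}` is a cell of the old partition.
On `I_{α₀}`, `σ` permutes the three open subintervals cyclically and swaps `s₁, s₂`, so `σ⁻ⁿ x`
lies in the cell of `x` iff `3 ∣ n`, resp. `2 ∣ n`. The commutant is read off from `Sep`, since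
`Σ fₙ δⁿ` commutes with `a` iff `fₙ · (a ∘ σ⁻ⁿ - a) = 0` for every `n`.
-/
def SameCell (T : Set ℝ) (x y : ℝ) : Prop :=
  x = y ∨ ∀ u ∈ T, u ∉ Set.uIcc x y

section SameCell

variable {T S : Set ℝ} {x y z : ℝ}

lemma SameCell.symm (h : SameCell T x y) : SameCell T y x := by
  rcases h with rfl | h
  · exact Or.inl rfl
  · exact Or.inr fun u hu => Set.uIcc_comm x y ▸ h u hu

lemma SameCell.of_mem_uIcc (h : SameCell T x y) (hz : z ∈ Set.uIcc x y) : SameCell T x z := by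
  rcases h with rfl | h
  · exact Or.inl (Set.uIcc_self (a := x) ▸ hz : z ∈ ({x} : Set ℝ)).symm
  · exact Or.inr fun u hu hu' => h u hu (Set.uIcc_subset_uIcc_left hz hu')

lemma not_sameCell_of_mem_left (hxy : x ≠ y) (hx : x ∈ T) :
    ¬ SameCell T x y :=
  fun h => h.elim hxy fun h => h x hx Set.left_mem_uIcc

lemma sameCell_union_iff : SameCell (T ∪ S) x y ↔ SameCell T x y ∧ SameCell S x y := by
  simp only [SameCell, Set.mem_union, or_imp, forall_and]
  tauto

lemma sameCell_iff_forall_lt_iff (hx : x ∉ T) (hy : y ∉ T) :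
    SameCell T x y ↔ ∀ u ∈ T, (x < u ↔ y < u) := by
  constructor
  · rintro (rfl | h) u hu
    · rfl
    · have hux : u ≠ x := fun h => hx (h ▸ hu)
      have huy : u ≠ y := fun h => hy (h ▸ hu)
      have := h u hu
      rw [Set.mem_uIcc] at this
      constructor <;> intro <;> by_contra <;> grind
  · refine fun h => Or.inr fun u hu hu' => ?_
    have hux : u ≠ x := fun h => hx (h ▸ hu)
    have huy : u ≠ y := fun h => hy (h ▸ hu)
    have := h u hu
    rw [Set.mem_uIcc] at hu'
    grind

lemma SameCell.apply_eq (h : SameCell T x y) {f : ℝ → ℂ} (hf : f ∈ pcAlgOn T) :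
    f x = f y := by
  rcases h with rfl | h
  · rfl
  · exact hf x y (fun hx => h x hx Set.left_mem_uIcc) (fun hy => h y hy Set.right_mem_uIcc) h

lemma exists_apply_ne_of_not_sameCell (h : ¬ SameCell T x y) :
    ∃ f ∈ pcAlgOn T, f x ≠ f y := by
  simp only [SameCell, not_or, not_forall, not_not] at h
  obtain ⟨hxy, u, hu, hu'⟩ := h
  by_cases hend : u = x ∨ u = y
  · refine ⟨fun z => if z = u then 1 else 0, fun a b ha hb _ => ?_, ?_⟩
    · have hau : a ≠ u := fun h => ha (h ▸ hu)
      have hbu : b ≠ u := fun h => hb (h ▸ hu)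
      simp only [hau, hbu, if_false]
    · rcases hend with rfl | rfl <;> simp [hxy, Ne.symm hxy]
  · refine ⟨fun z => if z < u then 1 else 0, fun a b _ _ hab => ?_, ?_⟩
    · have := hab u hu
      rw [Set.mem_Icc] at this
      simp only
      split_ifs <;> grind
    · rw [Set.mem_uIcc] at hu'
      simp only
      split_ifs <;> grind

lemma mem_sep_pcAlgOn_iff {σ : Equiv.Perm ℝ} {n : ℤ} :
    x ∈ Sep (pcAlgOn T) σ n ↔ ¬ SameCell T x ((σ ^ n)⁻¹ x) :=
  ⟨fun ⟨_, hf, hne⟩ h => hne (h.apply_eq hf), exists_apply_ne_of_not_sameCell⟩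

lemma sep_pcAlgOn_union (σ : Equiv.Perm ℝ) (n : ℤ) :
    Sep (pcAlgOn (T ∪ S)) σ n = Sep (pcAlgOn T) σ n ∪ Sep (pcAlgOn S) σ n := by
  ext x
  simp only [Set.mem_union, mem_sep_pcAlgOn_iff, sameCell_union_iff, not_and_or]

lemma mem_sep_of_mem_sep_of_notMem_cell {J : Set ℝ} {σ : Equiv.Perm ℝ} {n : ℤ}
    (hSJ : S ⊆ J) (hJ : ∀ y z, SameCell T y z → y ∈ J → z ∈ J) (hx : x ∉ J)
    (h : x ∈ Sep (pcAlgOn S) σ n) : x ∈ Sep (pcAlgOn T) σ n := by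
  rw [mem_sep_pcAlgOn_iff] at h ⊢
  refine fun hT => h ?_
  rcases hT with heq | hT
  · exact Or.inl heq
  · refine Or.inr fun u hu hu' => hx ?_
    exact hJ u x (SameCell.of_mem_uIcc (Or.inr hT) hu').symm (hSJ hu)

end SameCell

section Cycle

variable {k : ℕ}

lemma image_zpow_of_cycle {X : Type*} {σ : Equiv.Perm X} {P : ZMod k → Set X}
    (hP : ∀ c, σ '' P c = P (c + 1)) (n : ℤ) (c : ZMod k) :
    (σ ^ n) '' P c = P (c + n) := by
  induction n using Int.induction_on generalizing c with
  | zero => simp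
  | succ n ih =>
    rw [zpow_add_one, Equiv.Perm.coe_mul, Set.image_comp, hP, ih]
    push_cast
    ring_nf
  | pred n ih =>
    have hinv : ⇑(σ⁻¹) '' P c = P (c - 1) := by
      rw [← sub_add_cancel c 1, ← hP, Equiv.Perm.inv_def, Equiv.symm_image_image,
        sub_add_cancel]
    rw [zpow_sub_one, Equiv.Perm.coe_mul, Set.image_comp, hinv, ih]
    push_cast
    ring_nf

lemma mem_sep_pcAlgOn_iff_of_cycle {σ : Equiv.Perm ℝ} {S : Set ℝ} {P : ZMod k → Set ℝ}
    (hP : ∀ c, σ '' P c = P (c + 1))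
    (hcell : ∀ c c', ∀ y ∈ P c, ∀ z ∈ P c', (SameCell S y z ↔ c = c'))
    {c : ZMod k} {x : ℝ} (hx : x ∈ P c) (n : ℤ) :
    x ∈ Sep (pcAlgOn S) σ n ↔ ¬ (k : ℤ) ∣ n := by
  have hy : (σ ^ n)⁻¹ x ∈ P (c - n) := by
    rw [← zpow_neg, sub_eq_add_neg, ← Int.cast_neg, ← image_zpow_of_cycle hP]
    exact Set.mem_image_of_mem _ hx
  rw [mem_sep_pcAlgOn_iff, hcell c _ x hx _ hy, ← ZMod.intCast_zmod_eq_zero_iff_dvd, eq_comm,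
    sub_eq_self]

end Cycle

section ThreeCycle

variable {σ : Equiv.Perm ℝ} {s1 s2 x : ℝ} {I1 I2 I3 : Set ℝ}

lemma mem_sep_pair_iff_of_mem_intervals (hs12 : s1 < s2) (hI1 : I1 ⊆ Set.Iio s1)
    (hI2 : I2 ⊆ Set.Ioo s1 s2) (hI3 : I3 ⊆ Set.Ioi s2)
    (hm1 : σ '' I1 = I2) (hm2 : σ '' I2 = I3) (hm3 : σ '' I3 = I1)
    (hx : x ∈ I1 ∪ I2 ∪ I3) (n : ℤ) :
    x ∈ Sep (pcAlgOn {s1, s2}) σ n ↔ ¬ 3 ∣ n := by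
  let P : ZMod 3 → Set ℝ := ![I1, I2, I3]
  have hP : ∀ c, σ '' P c = P (c + 1) := by
    intro c
    fin_cases c
    exacts [hm1, hm2, hm3]
  have hpos : ∀ c, ∀ y ∈ P c,
      y ∉ ({s1, s2} : Set ℝ) ∧ (y < s1 ↔ c = 0) ∧ (y < s2 ↔ c ≠ 2) := by
    intro c y hy
    rcases (by decide : ∀ c : ZMod 3, c = 0 ∨ c = 1 ∨ c = 2) c with rfl | rfl | rfl
    · have h : y < s1 := hI1 hy
      refine ⟨?_, iff_of_true h (by decide), iff_of_true (h.trans hs12) (by decide)⟩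
      simp only [Set.mem_insert_iff, Set.mem_singleton_iff]
      rintro (h' | h') <;> linarith
    · have h : s1 < y ∧ y < s2 := hI2 hy
      refine ⟨?_, iff_of_false (by linarith) (by decide), iff_of_true h.2 (by decide)⟩
      simp only [Set.mem_insert_iff, Set.mem_singleton_iff]
      rintro (h' | h') <;> linarith
    · have h : s2 < y := hI3 hy
      refine ⟨?_, iff_of_false (by linarith) (by decide),
        iff_of_false (by linarith) (by decide)⟩
      simp only [Set.mem_insert_iff, Set.mem_singleton_iff]
      rintro (h' | h') <;> linarith
  have hcell : ∀ c c', ∀ y ∈ P c, ∀ z ∈ P c', (SameCell {s1, s2} y z ↔ c = c') := by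
    intro c c' y hy z hz
    obtain ⟨hyS, hy1, hy2⟩ := hpos c y hy
    obtain ⟨hzS, hz1, hz2⟩ := hpos c' z hz
    simp only [sameCell_iff_forall_lt_iff hyS hzS, Set.mem_insert_iff, Set.mem_singleton_iff,
      forall_eq_or_imp, forall_eq, hy1, hy2, hz1, hz2]
    clear hy hz hy1 hy2 hz1 hz2
    revert c c'
    decide
  rcases hx with (hx | hx) | hx
  exacts [mem_sep_pcAlgOn_iff_of_cycle (c := 0) hP hcell hx n,
    mem_sep_pcAlgOn_iff_of_cycle (c := 1) hP hcell hx n,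
    mem_sep_pcAlgOn_iff_of_cycle (c := 2) hP hcell hx n]

lemma mem_sep_pair_iff_of_mem_pair (hs12 : s1 < s2) (hm4 : σ s1 = s2) (hm5 : σ s2 = s1)
    (hx : x ∈ ({s1, s2} : Set ℝ)) (n : ℤ) :
    x ∈ Sep (pcAlgOn {s1, s2}) σ n ↔ Odd n := by
  let P : ZMod 2 → Set ℝ := ![{s1}, {s2}]
  have hP : ∀ c, σ '' P c = P (c + 1) := by
    intro c
    fin_cases c
    exacts [show σ '' {s1} = {s2} by simp [hm4], show σ '' {s2} = {s1} by simp [hm5]]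
  have hcell : ∀ c c', ∀ y ∈ P c, ∀ z ∈ P c', (SameCell {s1, s2} y z ↔ c = c') := by
    have h12 : ¬ SameCell {s1, s2} s1 s2 := not_sameCell_of_mem_left hs12.ne (by simp)
    have h21 : ¬ SameCell {s1, s2} s2 s1 := not_sameCell_of_mem_left hs12.ne' (by simp)
    intro c c' y hy z hz
    rcases (by decide : ∀ c : ZMod 2, c = 0 ∨ c = 1) c with rfl | rfl <;>
      rcases (by decide : ∀ c : ZMod 2, c = 0 ∨ c = 1) c' with rfl | rfl <;>
      obtain rfl : y = _ := hy <;> obtain rfl : z = _ := hz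
    exacts [iff_of_true (Or.inl rfl) rfl, iff_of_false h12 (by decide),
      iff_of_false h21 (by decide), iff_of_true (Or.inl rfl) rfl]
  rw [← Int.not_even_iff_odd, even_iff_two_dvd]
  rcases hx with rfl | rfl
  exacts [mem_sep_pcAlgOn_iff_of_cycle (c := 0) hP hcell rfl n,
    mem_sep_pcAlgOn_iff_of_cycle (c := 1) hP hcell rfl n]

theorem sep_union_pair_eq {T : Set ℝ} (hs12 : s1 < s2)
    (hI1 : I1 ⊆ Set.Iio s1) (hI2 : I2 ⊆ Set.Ioo s1 s2) (hI3 : I3 ⊆ Set.Ioi s2)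
    (hm1 : σ '' I1 = I2) (hm2 : σ '' I2 = I3) (hm3 : σ '' I3 = I1)
    (hm4 : σ s1 = s2) (hm5 : σ s2 = s1)
    (hcell : ∀ y z, SameCell T y z →
      y ∈ I1 ∪ I2 ∪ I3 ∪ {s1, s2} → z ∈ I1 ∪ I2 ∪ I3 ∪ {s1, s2})
    (n : ℤ) :
    Sep (pcAlgOn (T ∪ {s1, s2})) σ n = Sep (pcAlgOn T) σ n ∪
      {x | (¬ 3 ∣ n ∧ x ∈ I1 ∪ I2 ∪ I3) ∨ (Odd n ∧ x ∈ ({s1, s2} : Set ℝ))} := by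
  rw [sep_pcAlgOn_union]
  ext x
  show _ ∨ _ ↔ _ ∨ (_ ∧ _ ∨ _ ∧ _)
  have hpair : x ∈ ({s1, s2} : Set ℝ) → (x ∈ Sep (pcAlgOn {s1, s2}) σ n ↔ Odd n) :=
    fun hx => mem_sep_pair_iff_of_mem_pair hs12 hm4 hm5 hx n
  by_cases hU : x ∈ I1 ∪ I2 ∪ I3
  · have := mem_sep_pair_iff_of_mem_intervals hs12 hI1 hI2 hI3 hm1 hm2 hm3 hU n
    tauto
  by_cases hS : x ∈ ({s1, s2} : Set ℝ)
  · tauto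
  have := mem_sep_of_mem_sep_of_notMem_cell (x := x) (σ := σ) (n := n)
    Set.subset_union_right hcell (by rintro (h | h) <;> contradiction)
  tauto

end ThreeCycle

lemma sum_single_apply_of_zero {ι M N : Type*} [Zero M] [AddCommMonoid N] (f : ι →₀ M)
    (g : ι → M → N) (hg : ∀ i, g i 0 = 0) (i : ι) :
    (f.sum fun j b => Finsupp.single j (g j b)) i = g i (f i) := by
  rw [Finsupp.sum_apply]
  simp only [Finsupp.single_apply]
  rw [Finsupp.sum_ite_eq' f i g]
  split_ifs with h
  · rfl
  · rw [Finsupp.notMem_support_iff.mp h, hg]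

section Commutant

variable {X : Type*}

lemma cmul_single_zero_right_apply (σ : Equiv.Perm X) (f : ℤ →₀ (X → ℂ)) (a : X → ℂ)
    (n : ℤ) :
    cmul σ f (Finsupp.single 0 a) n = fun x => f n x * a ((σ ^ n)⁻¹ x) := by
  have hinner : ∀ (m : ℤ) (b : X → ℂ), ((Finsupp.single 0 a).sum fun k c =>
      Finsupp.single (m + k) (fun x => b x * c ((σ ^ m)⁻¹ x))) =
        Finsupp.single m (fun x => b x * a ((σ ^ m)⁻¹ x)) := by
    intro m b
    rw [Finsupp.sum_single_index (Finsupp.single_eq_zero.mpr (funext fun _ => mul_zero _)),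
      add_zero]
  rw [cmul]
  simp_rw [hinner]
  exact sum_single_apply_of_zero f (fun m b x => b x * a ((σ ^ m)⁻¹ x))
    (fun _ => funext fun _ => zero_mul _) n

lemma cmul_single_zero_left_apply (σ : Equiv.Perm X) (f : ℤ →₀ (X → ℂ)) (a : X → ℂ)
    (n : ℤ) :
    cmul σ (Finsupp.single 0 a) f n = a * f n := by
  rw [cmul, Finsupp.sum_single_index (by simp [← Pi.zero_def])]
  simp only [zero_add, zpow_zero, inv_one, Equiv.Perm.one_apply]
  exact sum_single_apply_of_zero f (fun _ c => a * c) (fun _ => mul_zero a) n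

lemma cmul_single_zero_comm_iff (σ : Equiv.Perm X) (f : ℤ →₀ (X → ℂ)) (a : X → ℂ) :
    cmul σ f (Finsupp.single 0 a) = cmul σ (Finsupp.single 0 a) f ↔
      ∀ n x, f n x * a ((σ ^ n)⁻¹ x) = a x * f n x := by
  simp only [Finsupp.ext_iff, funext_iff, cmul_single_zero_right_apply,
    cmul_single_zero_left_apply, Pi.mul_apply]

lemma mem_commutant_iff {A B : Subalgebra ℂ (X → ℂ)} {σ : Equiv.Perm X}
    {f : ℤ →₀ (X → ℂ)} :
    f ∈ commutant A B σ ↔ InCrossed B f ∧ ∀ n, ∀ x ∈ Sep A σ n, f n x = 0 := by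
  refine and_congr_right fun _ => ?_
  simp only [cmul_single_zero_comm_iff]
  constructor
  · rintro h n x ⟨a, ha, hne⟩
    have : f n x * (a ((σ ^ n)⁻¹ x) - a x) = 0 := by linear_combination h a ha n x
    exact (mul_eq_zero.mp this).resolve_right (sub_ne_zero.mpr hne.symm)
  · intro h a ha n x
    by_cases hax : a x = a ((σ ^ n)⁻¹ x)
    · rw [← hax, mul_comm]
    · simp [h n x ⟨a, ha, hax⟩]

lemma commutant_eq_diff_of_sep_eq_union {A A' B : Subalgebra ℂ (X → ℂ)} {σ : Equiv.Perm X}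
    {E : ℤ → Set X} (h : ∀ n, Sep A' σ n = Sep A σ n ∪ E n) :
    commutant A' B σ = commutant A B σ \ {f | ∃ n, ∃ x ∈ E n, f n x ≠ 0} := by
  ext f
  simp only [Set.mem_sdiff, mem_commutant_iff, h, Set.mem_union, or_imp, forall_and,
    Set.mem_ofPred_eq, not_exists, not_and, not_not]
  tauto

end Commutant

section OpenPiece

variable {N : ℕ} {t : Fin N → ℝ}

lemma exists_eq_tE {i : ℕ} {a b : ℝ} (ha : (a : EReal) ≤ tE N t i) (hb : tE N t i ≤ b) :
    ∃ j, (t j : EReal) = tE N t i := by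
  unfold tE at *
  split_ifs at * with h
  · exact ⟨_, rfl⟩
  · simp at ha
  · simp at hb

lemma mem_openPiece_of_sameCell {a : ℕ} {x y : ℝ} (h : SameCell (Set.range t) x y)
    (hx : x ∈ openPiece N t a) : y ∈ openPiece N t a := by
  rcases h with rfl | h
  · exact hx
  obtain ⟨hx1, hx2⟩ := hx
  constructor
  · by_contra! hy
    obtain ⟨j, hj⟩ := exists_eq_tE hy hx1.le
    rw [← hj, EReal.coe_le_coe_iff] at hy
    rw [← hj, EReal.coe_lt_coe_iff] at hx1
    exact h (t j) ⟨j, rfl⟩ (Set.mem_uIcc.mpr (Or.inr ⟨hy, hx1.le⟩))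
  · by_contra! hy
    obtain ⟨j, hj⟩ := exists_eq_tE hx2.le hy
    rw [← hj, EReal.coe_le_coe_iff] at hy
    rw [← hj, EReal.coe_lt_coe_iff] at hx2
    exact h (t j) ⟨j, rfl⟩ (Set.mem_uIcc.mpr (Or.inl ⟨hx2.le, hy⟩))

lemma openPiece_eq_union {a : ℕ} {s1 s2 : ℝ} (hs1 : s1 ∈ openPiece N t a)
    (hs2 : s2 ∈ openPiece N t a) :
    openPiece N t a = {x : ℝ | tE N t a < (x : EReal) ∧ x < s1} ∪ Set.Ioo s1 s2 ∪
      {x : ℝ | s2 < x ∧ (x : EReal) < tE N t (a + 1)} ∪ {s1, s2} := by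
  ext x
  constructor
  · rintro ⟨h1, h2⟩
    rcases lt_trichotomy x s1 with h | rfl | h
    · exact Or.inl (Or.inl (Or.inl ⟨h1, h⟩))
    · exact Or.inr (Or.inl rfl)
    rcases lt_trichotomy x s2 with h' | rfl | h'
    · exact Or.inl (Or.inl (Or.inr ⟨h, h'⟩))
    · exact Or.inr (Or.inr rfl)
    · exact Or.inl (Or.inr ⟨h', h2⟩)
  · rintro (((⟨h1, h2⟩ | ⟨h1, h2⟩) | ⟨h1, h2⟩) | rfl | rfl)
    · exact ⟨h1, (EReal.coe_lt_coe_iff.mpr h2).trans hs1.2⟩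
    · exact ⟨hs1.1.trans (EReal.coe_lt_coe_iff.mpr h1),
        (EReal.coe_lt_coe_iff.mpr h2).trans hs2.2⟩
    · exact ⟨hs2.1.trans (EReal.coe_lt_coe_iff.mpr h1), h2⟩
    · exact hs1
    · exact hs2

end OpenPiece

theorem statement18_general (N : ℕ) (t : Fin N → ℝ)
    (a0 : ℕ) (s1 s2 : ℝ) (hs12 : s1 < s2)
    (hs1 : s1 ∈ openPiece N t a0) (hs2 : s2 ∈ openPiece N t a0)
    (I1 I2 I3 : Set ℝ)
    (hI1 : I1 = {x : ℝ | tE N t a0 < (x : EReal) ∧ x < s1})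
    (hI2 : I2 = Set.Ioo s1 s2)
    (hI3 : I3 = {x : ℝ | s2 < x ∧ (x : EReal) < tE N t (a0 + 1)})
    (σ : Equiv.Perm ℝ)
    (hm1 : σ '' I1 = I2) (hm2 : σ '' I2 = I3) (hm3 : σ '' I3 = I1)
    (hm4 : σ s1 = s2) (hm5 : σ s2 = s1) :
    (∀ n : ℤ,
      (Odd n → (3 : ℤ) ∣ n →
        Sep (pcAlgOn (Set.range t ∪ {s1, s2})) σ n =
          Sep (pcAlgOn (Set.range t)) σ n ∪ ({s1} ∪ {s2})) ∧
      (¬((3 : ℤ) ∣ n) → Odd n →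
        Sep (pcAlgOn (Set.range t ∪ {s1, s2})) σ n =
          Sep (pcAlgOn (Set.range t)) σ n ∪ (I1 ∪ I2 ∪ I3) ∪ ({s1} ∪ {s2})) ∧
      (¬((3 : ℤ) ∣ n) → Even n →
        Sep (pcAlgOn (Set.range t ∪ {s1, s2})) σ n =
          Sep (pcAlgOn (Set.range t)) σ n ∪ (I1 ∪ I2 ∪ I3)) ∧
      (Even n → (3 : ℤ) ∣ n →
        Sep (pcAlgOn (Set.range t ∪ {s1, s2})) σ n =
          Sep (pcAlgOn (Set.range t)) σ n)) ∧
    commutant (pcAlgOn (Set.range t ∪ {s1, s2})) (pcAlgOn (Set.range t ∪ {s1, s2})) σ =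
      commutant (pcAlgOn (Set.range t)) (pcAlgOn (Set.range t ∪ {s1, s2})) σ \
        ({f : ℤ →₀ (ℝ → ℂ) | ∃ n : ℤ, ¬((3 : ℤ) ∣ n) ∧
            ¬(∀ x ∈ I1 ∪ I2 ∪ I3, f n x = 0)} ∪
          {f : ℤ →₀ (ℝ → ℂ) | ∃ n : ℤ,
            ¬(∀ x ∈ ({s1} ∪ {s2} : Set ℝ), f (2 * n + 1) x = 0)}) := by
  have hJ := openPiece_eq_union hs1 hs2
  rw [← hI1, ← hI2, ← hI3] at hJ
  have hsep := sep_union_pair_eq (T := Set.range t) hs12 (hI1 ▸ fun x hx => hx.2) hI2.subset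
    (hI3 ▸ fun x hx => hx.1) hm1 hm2 hm3 hm4 hm5
    (fun y z h hy => hJ ▸ mem_openPiece_of_sameCell h (hJ ▸ hy))
  rw [Set.singleton_union]
  refine ⟨fun n => ⟨fun ho h3 => ?_, fun h3 ho => ?_, fun h3 he => ?_, fun he h3 => ?_⟩, ?_⟩
  · rw [hsep n]; congr 1; ext x; simp [ho, h3]
  · rw [hsep n, Set.union_assoc (Sep _ _ _)]; congr 1; ext x; simp [ho, h3]; tauto
  · rw [hsep n]; congr 1; ext x; simp [h3, Int.not_odd_iff_even.mpr he]
  · rw [hsep n]; simp [h3, Int.not_odd_iff_even.mpr he]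
  rw [commutant_eq_diff_of_sep_eq_union hsep]
  congr 1
  ext f
  constructor
  · rintro ⟨n, x, ⟨h3, hx⟩ | ⟨⟨m, rfl⟩, hx⟩, hne⟩
    · exact Or.inl ⟨n, h3, fun h => hne (h x hx)⟩
    · exact Or.inr ⟨m, fun h => hne (h x hx)⟩
  · rintro (⟨n, h3, hne⟩ | ⟨m, hne⟩) <;> obtain ⟨x, hx, hne⟩ := not_forall₂.mp hne
    · exact ⟨n, x, Or.inl ⟨h3, hx⟩, hne⟩
    · exact ⟨2 * m + 1, x, Or.inr ⟨⟨m, rfl⟩, hx⟩, hne⟩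

/-- two jump points `s₁ < s₂` added into one interval `I_{α₀}`, with the three
open subintervals permuted in a 3-cycle by `σ` and the two jump points interchanged. Then
`Sepⁿ_{𝒜_S} = Sepⁿ_𝒜 ∪ (I⁴ ∪ I⁵)` if `n` is odd and `3 ∣ n`;
`Sepⁿ_{𝒜_S} = Sepⁿ_𝒜 ∪ (I¹ ∪ I² ∪ I³)` (together with `I⁴ ∪ I⁵` when `n` is odd) if `3 ∤ n`;
and `Sepⁿ_{𝒜_S} = Sepⁿ_𝒜` if `n` is even and `3 ∣ n`. Consequently
`𝒜_S' = 𝒜' \ ({Σ fₙδⁿ : fₙ ≢ 0 on I¹ ∪ I² ∪ I³ for some n with 3 ∤ n} ∪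
{Σ fₙδⁿ : f_{2n+1} ≢ 0 on I⁴ ∪ I⁵ for some n})`. -/
theorem statement18 (N : ℕ) (t : Fin N → ℝ) (ht : StrictMono t)
    (a0 : ℕ) (ha0 : a0 ≤ N) (s1 s2 : ℝ) (hs12 : s1 < s2)
    (hs1 : s1 ∈ openPiece N t a0) (hs2 : s2 ∈ openPiece N t a0)
    (I1 I2 I3 : Set ℝ)
    (hI1 : I1 = {x : ℝ | tE N t a0 < (x : EReal) ∧ x < s1})
    (hI2 : I2 = Set.Ioo s1 s2)
    (hI3 : I3 = {x : ℝ | s2 < x ∧ (x : EReal) < tE N t (a0 + 1)})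
    (σ : Equiv.Perm ℝ)
    (h1 : AlgInvariant (pcAlgOn (Set.range t)) σ)
    (h2 : AlgInvariant (pcAlgOn (Set.range t)) σ.symm)
    (h3 : AlgInvariant (pcAlgOn (Set.range t ∪ {s1, s2})) σ)
    (h4 : AlgInvariant (pcAlgOn (Set.range t ∪ {s1, s2})) σ.symm)
    (hm1 : σ '' I1 = I2) (hm2 : σ '' I2 = I3) (hm3 : σ '' I3 = I1)
    (hm4 : σ s1 = s2) (hm5 : σ s2 = s1) :
    (∀ n : ℤ,
      (Odd n → (3 : ℤ) ∣ n →
        Sep (pcAlgOn (Set.range t ∪ {s1, s2})) σ n =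
          Sep (pcAlgOn (Set.range t)) σ n ∪ ({s1} ∪ {s2})) ∧
      (¬((3 : ℤ) ∣ n) → Odd n →
        Sep (pcAlgOn (Set.range t ∪ {s1, s2})) σ n =
          Sep (pcAlgOn (Set.range t)) σ n ∪ (I1 ∪ I2 ∪ I3) ∪ ({s1} ∪ {s2})) ∧
      (¬((3 : ℤ) ∣ n) → Even n →
        Sep (pcAlgOn (Set.range t ∪ {s1, s2})) σ n =
          Sep (pcAlgOn (Set.range t)) σ n ∪ (I1 ∪ I2 ∪ I3)) ∧
      (Even n → (3 : ℤ) ∣ n →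
        Sep (pcAlgOn (Set.range t ∪ {s1, s2})) σ n =
          Sep (pcAlgOn (Set.range t)) σ n)) ∧
    commutant (pcAlgOn (Set.range t ∪ {s1, s2})) (pcAlgOn (Set.range t ∪ {s1, s2})) σ =
      commutant (pcAlgOn (Set.range t)) (pcAlgOn (Set.range t ∪ {s1, s2})) σ \
        ({f : ℤ →₀ (ℝ → ℂ) | ∃ n : ℤ, ¬((3 : ℤ) ∣ n) ∧
            ¬(∀ x ∈ I1 ∪ I2 ∪ I3, f n x = 0)} ∪
          {f : ℤ →₀ (ℝ → ℂ) | ∃ n : ℤ,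
            ¬(∀ x ∈ ({s1} ∪ {s2} : Set ℝ), f (2 * n + 1) x = 0)}) :=
  statement18_general N t a0 s1 s2 hs12 hs1 hs2 I1 I2 I3 hI1 hI2 hI3 σ hm1 hm2 hm3 hm4 hm5

end PaperTRS
end
end

section
/- Suppose jump points s₁ and s₂ are added into two different open intervals I_{α₁} = (t_{α₁},t_{α₁+1}) and I_{α₂} = (t_{α₂},t_{α₂+1}), producing subintervals I_{αᵢ}¹ = (t_{αᵢ},sᵢ), I_{αᵢ}² = (sᵢ,t_{αᵢ+1}) and singletons {sᵢ} (i = 1,2). Let σ be a bijection of ℝ with both 𝒜 and 𝒜_S invariant under σ and σ⁻¹, with σ(s₁) = s₂, σ(s₂) = s₁ (so σ(I_{α₁}) = I_{α₂} and σ(I_{α₂}) = I_{α₁}, and I_{α₁}, I_{α₂} ⊆ C₂), and assume the four open subintervals are mapped in a single 4-cycle: σ(I_{α₁}¹) = I_{α₂}¹, σ(I_{α₂}¹) = I_{α₁}², σ(I_{α₁}²) = I_{α₂}², σ(I_{α₂}²) = I_{α₁}¹. Then Sepⁿ_{𝒜_S}(ℝ) = Sepⁿ_𝒜(ℝ) ∪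 (I_{α₁}¹ ∪ I_{α₁}² ∪ I_{α₂}¹ ∪ I_{α₂}²) if 4 ∤ n, and Sepⁿ_{𝒜_S}(ℝ) = Sepⁿ_𝒜(ℝ) if 4 ∣ n; consequently 𝒜_S′ = 𝒜′ \ {Σₙ fₙδⁿ ∈ 𝒜′ : fₙ does not vanish identically on I_{α₁}¹ ∪ I_{α₁}² ∪ I_{α₂}¹ ∪ I_{α₂}² for some n with 4 ∤ n}. -/
open scoped Classical

noncomputable section

namespace PaperTRS

def Erel (T : Set ℝ) (x y : ℝ) : Prop :=
  x = y ∨ (x ∉ T ∧ y ∉ T ∧ ∀ u ∈ T, u ∉ Set.Icc (min x y) (max x y))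

def cyc (I11 I21 I12 I22 : Set ℝ) (m : ℤ) : Set ℝ :=
  if m % 4 = 0 then I11 else if m % 4 = 1 then I21 else if m % 4 = 2 then I12 else I22

lemma erel_iff (T : Set ℝ) (x y : ℝ) :
    (∀ h ∈ pcAlgOn T, h x = h y) ↔ Erel T x y := by
  constructor
  · intro H
    by_cases hxy : x = y
    · exact Or.inl hxy
    right
    have hx : x ∉ T := by
      intro hx
      have hmem : (fun z => if z = x then (1:ℂ) else 0) ∈ pcAlgOn T := by
        intro z w hz hw _
        simp [show z ≠ x from fun h => hz (h ▸ hx), show w ≠ x from fun h => hw (h ▸ hx)]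
      have h := H _ hmem
      simp [Ne.symm hxy] at h
    have hy : y ∉ T := by
      intro hy
      have hmem : (fun z => if z = y then (1:ℂ) else 0) ∈ pcAlgOn T := by
        intro z w hz hw _
        simp [show z ≠ y from fun h => hz (h ▸ hy), show w ≠ y from fun h => hw (h ▸ hy)]
      have h := H _ hmem
      simp [hxy] at h
    refine ⟨hx, hy, ?_⟩
    intro u hu hmemI
    have hux : u ≠ x := fun h => hx (h ▸ hu)
    have huy : u ≠ y := fun h => hy (h ▸ hu)
    have hstep : (fun z => if z ≤ u then (1:ℂ) else 0) ∈ pcAlgOn T := by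
      intro z w hz hw hno
      have hu' := hno u hu
      have hiff : (z ≤ u) ↔ (w ≤ u) := by
        constructor
        · intro h1
          by_contra h2
          exact hu' ⟨le_trans (min_le_left z w) h1,
            le_trans (not_le.mp h2).le (le_max_right z w)⟩
        · intro h1
          by_contra h2
          exact hu' ⟨le_trans (min_le_right z w) h1,
            le_trans (not_le.mp h2).le (le_max_left z w)⟩
      exact if_congr hiff rfl rfl
    have h := H _ hstep
    rcases hmemI with ⟨hmin, hmax⟩
    rcases le_total x y with hle | hle
    · rw [min_eq_left hle] at hmin
      rw [max_eq_right hle] at hmax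
      have hyu : ¬ y ≤ u := fun hh => huy (le_antisymm hmax hh)
      simp [hmin, hyu] at h
    · rw [min_eq_right hle] at hmin
      rw [max_eq_left hle] at hmax
      have hxu : ¬ x ≤ u := fun hh => hux (le_antisymm hmax hh)
      simp [hmin, hxu] at h
  · rintro (rfl | ⟨hx, hy, hno⟩) h hh
    · rfl
    · exact hh x y hx hy hno

lemma sep_iff (T : Set ℝ) (σ : Equiv.Perm ℝ) (n : ℤ) (x : ℝ) :
    x ∈ Sep (pcAlgOn T) σ n ↔ ¬ Erel T x ((σ ^ n)⁻¹ x) := by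
  rw [← erel_iff]
  constructor
  · rintro ⟨h, hA, hne⟩ H
    exact hne (H h hA)
  · intro H
    by_contra hc
    apply H
    intro h hA
    by_contra hne
    exact hc ⟨h, hA, hne⟩

lemma erel_mono {T T' : Set ℝ} (hT : T ⊆ T') {x y : ℝ} (h : Erel T' x y) : Erel T x y := by
  rcases h with rfl | ⟨hx, hy, hno⟩
  · exact Or.inl rfl
  · exact Or.inr ⟨fun h => hx (hT h), fun h => hy (hT h), fun u hu => hno u (hT hu)⟩

lemma alg_inv_zpow {A : Subalgebra ℂ (ℝ → ℂ)} {σ : Equiv.Perm ℝ}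
    (h1 : AlgInvariant A σ) (h2 : AlgInvariant A σ.symm) :
    ∀ n : ℤ, ∀ h ∈ A, (h ∘ ⇑(σ ^ n)) ∈ A := by
  intro n
  induction n using Int.induction_on with
  | zero => intro h hA; simpa using hA
  | succ k ih =>
      intro h hA
      have h' := h1 _ (ih h hA)
      have e : (h ∘ ⇑(σ ^ ((k : ℤ) + 1))) = (h ∘ ⇑(σ ^ (k : ℤ))) ∘ ⇑σ := by
        funext z
        simp [zpow_add_one, Equiv.Perm.mul_apply]
      rw [e]; exact h'
  | pred k ih =>
      intro h hA
      have h' := h2 _ (ih h hA)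
      have e : (h ∘ ⇑(σ ^ (-(k : ℤ) - 1))) = (h ∘ ⇑(σ ^ (-(k : ℤ)))) ∘ ⇑σ.symm := by
        funext z
        simp [zpow_sub_one, Equiv.Perm.mul_apply, Equiv.Perm.inv_def]
      rw [e]; exact h'

lemma tE_mono {N : ℕ} {t : Fin N → ℝ} (ht : StrictMono t) {i j : ℕ}
    (hij : i ≤ j) (hj : j ≤ N + 1) : tE N t i ≤ tE N t j := by
  unfold tE
  by_cases hi1 : 1 ≤ i ∧ i ≤ N
  · by_cases hj1 : 1 ≤ j ∧ j ≤ N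
    · rw [dif_pos hi1, dif_pos hj1, EReal.coe_le_coe_iff]
      exact ht.monotone (by simp [Fin.mk_le_mk]; omega)
    · rw [dif_pos hi1, dif_neg hj1, if_neg (by omega : ¬ j = 0)]
      exact le_top
  · by_cases hi0 : i = 0
    · rw [dif_neg hi1, if_pos hi0]
      exact bot_le
    · have hj1 : ¬ (1 ≤ j ∧ j ≤ N) := by omega
      rw [dif_neg hi1, if_neg hi0, dif_neg hj1, if_neg (by omega : ¬ j = 0)]

lemma openPiece_disj {N : ℕ} {t : Fin N → ℝ} (ht : StrictMono t) {a b : ℕ}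
    (ha : a ≤ N) (hb : b ≤ N) (hab : a ≠ b) {x : ℝ}
    (hxa : x ∈ openPiece N t a) (hxb : x ∈ openPiece N t b) : False := by
  rcases Nat.lt_or_ge a b with h | h
  · have h1 : (x : EReal) < tE N t b :=
      hxa.2.trans_le (tE_mono ht (by omega) (by omega))
    exact absurd (h1.trans hxb.1) (lt_irrefl _)
  · have hba : b < a := by omega
    have h1 : (x : EReal) < tE N t a :=
      hxb.2.trans_le (tE_mono ht (by omega) (by omega))
    exact absurd (h1.trans hxa.1) (lt_irrefl _)

lemma sep_point_lt {N : ℕ} {t : Fin N → ℝ} (ht : StrictMono t) {a b : ℕ}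
    (hb : b ≤ N) (hab : a < b) {x y : ℝ}
    (hx : x ∈ openPiece N t a) (hy : y ∈ openPiece N t b) :
    ∃ u ∈ Set.range t, x < u ∧ u < y := by
  have hb1 : b - 1 < N := by omega
  refine ⟨t ⟨b - 1, hb1⟩, Set.mem_range_self _, ?_, ?_⟩
  · have h1 : (x : EReal) < tE N t b :=
      hx.2.trans_le (tE_mono ht (by omega) (by omega))
    rw [show tE N t b = ((t ⟨b - 1, hb1⟩ : ℝ) : EReal) by
      unfold tE; rw [dif_pos ⟨by omega, hb⟩]] at h1
    exact_mod_cast h1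
  · have h1 : tE N t b < (y : EReal) := hy.1
    rw [show tE N t b = ((t ⟨b - 1, hb1⟩ : ℝ) : EReal) by
      unfold tE; rw [dif_pos ⟨by omega, hb⟩]] at h1
    exact_mod_cast h1

lemma sep_point {N : ℕ} {t : Fin N → ℝ} (ht : StrictMono t) {a b : ℕ}
    (ha : a ≤ N) (hb : b ≤ N) (hab : a ≠ b) {x y : ℝ}
    (hx : x ∈ openPiece N t a) (hy : y ∈ openPiece N t b) :
    x ≠ y ∧ ∃ u ∈ Set.range t, u ∈ Set.Icc (min x y) (max x y) := by
  refine ⟨fun h => openPiece_disj ht ha hb hab hx (h ▸ hy), ?_⟩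
  rcases Nat.lt_or_ge a b with h | h
  · obtain ⟨u, hu, hxu, huy⟩ := sep_point_lt ht hb h hx hy
    exact ⟨u, hu, le_trans (min_le_left _ _) hxu.le, le_trans huy.le (le_max_right _ _)⟩
  · have hba : b < a := by omega
    obtain ⟨u, hu, hyu, hux⟩ := sep_point_lt ht ha hba hy hx
    exact ⟨u, hu, le_trans (min_le_right _ _) hyu.le, le_trans hux.le (le_max_left _ _)⟩

lemma around_s_lt {N : ℕ} {t : Fin N → ℝ} {a : ℕ} (ha : a ≤ N) {s x y : ℝ}
    (hs : s ∈ openPiece N t a)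
    (hno : ∀ u ∈ Set.range t, u ∉ Set.Icc x y)
    (hxs : x < s) (hsy : s < y) :
    (tE N t a < (x : EReal) ∧ x < s) ∧ (s < y ∧ (y : EReal) < tE N t (a + 1)) := by
  refine ⟨⟨?_, hxs⟩, hsy, ?_⟩
  · by_cases ha1 : 1 ≤ a ∧ a ≤ N
    · have hdef : tE N t a = ((t ⟨a - 1, by omega⟩ : ℝ) : EReal) := by
        unfold tE; rw [dif_pos ha1]
      by_contra hlt
      push_neg at hlt
      have h1 : tE N t a < (s : EReal) := hs.1
      rw [hdef] at hlt h1
      have h1' : (t ⟨a - 1, by omega⟩ : ℝ) < s := by exact_mod_cast h1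
      have h2' : x ≤ (t ⟨a - 1, by omega⟩ : ℝ) := by exact_mod_cast hlt
      exact hno _ (Set.mem_range_self _) ⟨h2', le_trans h1'.le hsy.le⟩
    · have ha0 : a = 0 := by omega
      rw [show tE N t a = ⊥ by unfold tE; rw [dif_neg ha1, if_pos ha0]]
      exact bot_lt_iff_ne_bot.mpr (by simp)
  · by_cases ha1 : 1 ≤ a + 1 ∧ a + 1 ≤ N
    · have hdef : tE N t (a + 1) = ((t ⟨a, by omega⟩ : ℝ) : EReal) := by
        unfold tE; rw [dif_pos ha1]; norm_num
      by_contra hlt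
      push_neg at hlt
      have h1 : (s : EReal) < tE N t (a + 1) := hs.2
      rw [hdef] at hlt h1
      have h1' : s < (t ⟨a, by omega⟩ : ℝ) := by exact_mod_cast h1
      have h2' : (t ⟨a, by omega⟩ : ℝ) ≤ y := by exact_mod_cast hlt
      exact hno _ (Set.mem_range_self _) ⟨le_trans hxs.le h1'.le, h2'⟩
    · have ha0 : a + 1 = N + 1 := by omega
      rw [show tE N t (a + 1) = ⊤ by unfold tE; rw [dif_neg ha1, if_neg (by omega)]]
      exact lt_top_iff_ne_top.mpr (by simp)

lemma around_s {N : ℕ} {t : Fin N → ℝ} {a : ℕ} (ha : a ≤ N) {s x y : ℝ}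
    (hs : s ∈ openPiece N t a) (hxy : x ≠ y)
    (hno : ∀ u ∈ Set.range t, u ∉ Set.Icc (min x y) (max x y))
    (hsx : s ≠ x) (hsy : s ≠ y)
    (hsI : s ∈ Set.Icc (min x y) (max x y)) :
    ((tE N t a < (x : EReal) ∧ x < s) ∧ (s < y ∧ (y : EReal) < tE N t (a + 1))) ∨
    ((tE N t a < (y : EReal) ∧ y < s) ∧ (s < x ∧ (x : EReal) < tE N t (a + 1))) := by
  rcases hsI with ⟨hmin, hmax⟩
  rcases lt_trichotomy x y with hlt | heq | hlt
  · left
    rw [min_eq_left hlt.le] at hmin hno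
    rw [max_eq_right hlt.le] at hmax hno
    exact around_s_lt ha hs hno (lt_of_le_of_ne hmin (Ne.symm hsx)) (lt_of_le_of_ne hmax hsy)
  · exact absurd heq hxy
  · right
    rw [min_eq_right hlt.le] at hmin hno
    rw [max_eq_left hlt.le] at hmax hno
    exact around_s_lt ha hs hno (lt_of_le_of_ne hmin (Ne.symm hsy)) (lt_of_le_of_ne hmax hsx)

lemma sum_single_eval {X : Type*} (f : ℤ →₀ (X → ℂ)) (v : ℤ → (X → ℂ) → (X → ℂ))
    (hv : ∀ m, v m 0 = 0) (m : ℤ) :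
    (f.sum fun n fn => Finsupp.single n (v n fn)) m = v m (f m) := by
  classical
  rw [Finsupp.sum_apply]
  simp only [Finsupp.single_apply]
  rw [Finsupp.sum_ite_eq' f m (fun n fn => v n fn)]
  split_ifs with h
  · rfl
  · rw [Finsupp.notMem_support_iff.mp h, hv]

lemma cmul_single_right {X : Type*} (σ : Equiv.Perm X) (f : ℤ →₀ (X → ℂ)) (a : X → ℂ) :
    cmul σ f (Finsupp.single 0 a) =
      f.sum fun n fn => Finsupp.single n (fun x => fn x * a ((σ ^ n)⁻¹ x)) := by
  unfold cmul
  apply Finsupp.sum_congr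
  intro n _
  rw [Finsupp.sum_single_index]
  · simp
  · have e : (fun x => (fun x => f n x * ((0 : X → ℂ)) ((σ ^ n)⁻¹ x)) x) = (0 : X → ℂ) := by
      funext x; simp
    simp only [Pi.zero_apply, mul_zero]
    convert Finsupp.single_zero (n + 0)
    rfl

lemma cmul_single_left {X : Type*} (σ : Equiv.Perm X) (f : ℤ →₀ (X → ℂ)) (a : X → ℂ) :
    cmul σ (Finsupp.single 0 a) f =
      f.sum fun n fn => Finsupp.single n (fun x => a x * fn x) := by
  unfold cmul
  rw [Finsupp.sum_single_index]
  · apply Finsupp.sum_congr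
    intro n _
    simp
  · have e : ∀ m (b : X → ℂ), Finsupp.single ((0:ℤ) + m)
        (fun x => (0 : X → ℂ) x * b ((σ ^ (0:ℤ))⁻¹ x)) = 0 := by
      intro m b
      have e2 : (fun x => (0 : X → ℂ) x * b ((σ ^ (0:ℤ))⁻¹ x)) = (0 : X → ℂ) := by
        funext x; simp
      rw [e2, Finsupp.single_zero]
    simp only [e]
    simp [Finsupp.sum]

lemma commutant_eq {X : Type*} (A B : Subalgebra ℂ (X → ℂ)) (σ : Equiv.Perm X) :
    commutant A B σ =
      {f | InCrossed B f ∧ ∀ n : ℤ, ∀ x ∈ Sep A σ n, f n x = 0} := by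
  ext f
  simp only [commutant, Set.mem_setOf_eq, and_congr_right_iff]
  intro _
  constructor
  · intro H n x hx
    obtain ⟨h, hA, hne⟩ := hx
    have hcm := H h hA
    rw [cmul_single_right, cmul_single_left] at hcm
    have e1 : (f.sum fun n fn => Finsupp.single n (fun x => fn x * h ((σ ^ n)⁻¹ x))) n
        = fun x => f n x * h ((σ ^ n)⁻¹ x) :=
      sum_single_eval f _ (by intro m; funext x; simp) n
    have e2 : (f.sum fun n fn => Finsupp.single n (fun x => h x * fn x)) n
        = fun x => h x * f n x :=
      sum_single_eval f _ (by intro m; funext x; simp) n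
    have key : f n x * h ((σ ^ n)⁻¹ x) = h x * f n x := by
      calc f n x * h ((σ ^ n)⁻¹ x)
          = ((f.sum fun n fn => Finsupp.single n (fun x => fn x * h ((σ ^ n)⁻¹ x))) n) x :=
            (congrFun e1 x).symm
        _ = ((f.sum fun n fn => Finsupp.single n (fun x => h x * fn x)) n) x := by rw [hcm]
        _ = h x * f n x := congrFun e2 x
    by_contra hfz
    exact hne ((mul_left_cancel₀ hfz (key.trans (mul_comm _ _))).symm)
  · intro H h hA
    rw [cmul_single_right, cmul_single_left]
    apply Finsupp.sum_congr
    intro n _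
    congr 1
    funext x
    by_cases hx : x ∈ Sep A σ n
    · rw [H n x hx]; simp
    · have he : h x = h ((σ ^ n)⁻¹ x) := by
        by_contra hne; exact hx ⟨h, hA, hne⟩
      rw [← he, mul_comm]

lemma cyc_step (I11 I21 I12 I22 : Set ℝ) (σ : Equiv.Perm ℝ)
    (hm1 : σ '' I11 = I21) (hm2 : σ '' I21 = I12)
    (hm3 : σ '' I12 = I22) (hm4 : σ '' I22 = I11) (m : ℤ) :
    σ '' cyc I11 I21 I12 I22 m = cyc I11 I21 I12 I22 (m + 1) := by
  have h4 : m % 4 = 0 ∨ m % 4 = 1 ∨ m % 4 = 2 ∨ m % 4 = 3 := by omega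
  unfold cyc
  rcases h4 with h | h | h | h
  · rw [if_pos h, if_neg (show ¬ (m+1) % 4 = 0 by omega),
      if_pos (show (m+1) % 4 = 1 by omega)]
    exact hm1
  · rw [if_neg (show ¬ m % 4 = 0 by omega), if_pos h,
      if_neg (show ¬ (m+1) % 4 = 0 by omega), if_neg (show ¬ (m+1) % 4 = 1 by omega),
      if_pos (show (m+1) % 4 = 2 by omega)]
    exact hm2
  · rw [if_neg (show ¬ m % 4 = 0 by omega), if_neg (show ¬ m % 4 = 1 by omega), if_pos h,
      if_neg (show ¬ (m+1) % 4 = 0 by omega), if_neg (show ¬ (m+1) % 4 = 1 by omega),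
      if_neg (show ¬ (m+1) % 4 = 2 by omega)]
    exact hm3
  · rw [if_neg (show ¬ m % 4 = 0 by omega), if_neg (show ¬ m % 4 = 1 by omega),
      if_neg (show ¬ m % 4 = 2 by omega),
      if_pos (show (m+1) % 4 = 0 by omega)]
    exact hm4

lemma cyc_iter (I11 I21 I12 I22 : Set ℝ) (σ : Equiv.Perm ℝ)
    (hm1 : σ '' I11 = I21) (hm2 : σ '' I21 = I12)
    (hm3 : σ '' I12 = I22) (hm4 : σ '' I22 = I11) :
    ∀ n m : ℤ, ⇑(σ ^ n) '' cyc I11 I21 I12 I22 m = cyc I11 I21 I12 I22 (m + n) := by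
  intro n
  induction n using Int.induction_on with
  | zero => intro m; simp
  | succ k ih =>
      intro m
      rw [zpow_add_one, Equiv.Perm.coe_mul, Set.image_comp,
        cyc_step I11 I21 I12 I22 σ hm1 hm2 hm3 hm4 m, ih (m + 1),
        show m + 1 + (k : ℤ) = m + ((k : ℤ) + 1) by ring]
  | pred k ih =>
      intro m
      rw [zpow_sub_one, Equiv.Perm.coe_mul, Set.image_comp]
      have hinv : ⇑σ⁻¹ '' cyc I11 I21 I12 I22 m = cyc I11 I21 I12 I22 (m - 1) := by
        have hstep := cyc_step I11 I21 I12 I22 σ hm1 hm2 hm3 hm4 (m - 1)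
        rw [sub_add_cancel] at hstep
        rw [← hstep, show (⇑σ⁻¹ : ℝ → ℝ) = ⇑σ.symm from rfl]
        exact Equiv.symm_image_image σ _
      rw [hinv, ih (m - 1), show m - 1 + -(k : ℤ) = m + (-(k : ℤ) - 1) by ring]

lemma cyc_subU (I11 I21 I12 I22 : Set ℝ) (j : ℤ) (z : ℝ)
    (hz : z ∈ cyc I11 I21 I12 I22 j) : z ∈ I11 ∪ I12 ∪ I21 ∪ I22 := by
  unfold cyc at hz
  split_ifs at hz
  · exact Or.inl (Or.inl (Or.inl hz))
  · exact Or.inl (Or.inr hz)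
  · exact Or.inl (Or.inl (Or.inr hz))
  · exact Or.inr hz

lemma swap_iter (σ : Equiv.Perm ℝ) (s1 s2 : ℝ) (h1 : σ s1 = s2) (h2 : σ s2 = s1) :
    ∀ n : ℤ, (σ ^ n) s1 ∈ ({s1, s2} : Set ℝ) ∧ (σ ^ n) s2 ∈ ({s1, s2} : Set ℝ) := by
  have hi1 : σ.symm s1 = s2 := by rw [← h2]; exact σ.symm_apply_apply s2
  have hi2 : σ.symm s2 = s1 := by rw [← h1]; exact σ.symm_apply_apply s1
  intro n
  induction n using Int.induction_on with
  | zero => simp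
  | succ k ih =>
      constructor
      · rw [zpow_add_one, show (σ ^ (k:ℤ) * σ) s1 = (σ ^ (k:ℤ)) s2 by
          simp [Equiv.Perm.mul_apply, h1]]
        exact ih.2
      · rw [zpow_add_one, show (σ ^ (k:ℤ) * σ) s2 = (σ ^ (k:ℤ)) s1 by
          simp [Equiv.Perm.mul_apply, h2]]
        exact ih.1
  | pred k ih =>
      constructor
      · rw [zpow_sub_one, show (σ ^ (-(k:ℤ)) * σ⁻¹) s1 = (σ ^ (-(k:ℤ))) s2 by
          simp [Equiv.Perm.mul_apply, show (⇑σ⁻¹ : ℝ → ℝ) = ⇑σ.symm from rfl, hi1]]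
        exact ih.2
      · rw [zpow_sub_one, show (σ ^ (-(k:ℤ)) * σ⁻¹) s2 = (σ ^ (-(k:ℤ))) s1 by
          simp [Equiv.Perm.mul_apply, show (⇑σ⁻¹ : ℝ → ℝ) = ⇑σ.symm from rfl, hi2]]
        exact ih.1

lemma csep {N : ℕ} {t : Fin N → ℝ} (ht : StrictMono t) {a1 a2 : ℕ}
    (ha1 : a1 ≤ N) (ha2 : a2 ≤ N) (ha12 : a1 ≠ a2)
    {s1 s2 : ℝ} {I11 I12 I21 I22 : Set ℝ}
    (hI11a : I11 ⊆ openPiece N t a1) (hI12a : I12 ⊆ openPiece N t a1)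
    (hI21a : I21 ⊆ openPiece N t a2) (hI22a : I22 ⊆ openPiece N t a2)
    (hI11s : ∀ z ∈ I11, z < s1) (hI12s : ∀ z ∈ I12, s1 < z)
    (hI21s : ∀ z ∈ I21, z < s2) (hI22s : ∀ z ∈ I22, s2 < z)
    {j k : ℤ} (hjk : j % 4 ≠ k % 4) {z w : ℝ}
    (hz : z ∈ cyc I11 I21 I12 I22 j) (hw : w ∈ cyc I11 I21 I12 I22 k) :
    z ≠ w ∧ ∃ u ∈ Set.range t ∪ ({s1, s2} : Set ℝ), u ∈ Set.Icc (min z w) (max z w) := by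
  have cross : ∀ {p q : ℝ}, p ∈ openPiece N t a1 → q ∈ openPiece N t a2 →
      p ≠ q ∧ ∃ u ∈ Set.range t ∪ ({s1, s2} : Set ℝ), u ∈ Set.Icc (min p q) (max p q) := by
    intro p q hp hq
    obtain ⟨hne, u, hu, hI⟩ := sep_point ht ha1 ha2 ha12 hp hq
    exact ⟨hne, u, Or.inl hu, hI⟩
  have cross' : ∀ {p q : ℝ}, p ∈ openPiece N t a2 → q ∈ openPiece N t a1 →
      p ≠ q ∧ ∃ u ∈ Set.range t ∪ ({s1, s2} : Set ℝ), u ∈ Set.Icc (min p q) (max p q) := by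
    intro p q hp hq
    obtain ⟨hne, u, hu, hI⟩ := sep_point ht ha2 ha1 (Ne.symm ha12) hp hq
    exact ⟨hne, u, Or.inl hu, hI⟩
  have mid : ∀ (sm p q : ℝ), sm ∈ Set.range t ∪ ({s1, s2} : Set ℝ) → p < sm → sm < q →
      p ≠ q ∧ ∃ u ∈ Set.range t ∪ ({s1, s2} : Set ℝ), u ∈ Set.Icc (min p q) (max p q) :=
    fun sm p q hsm hps hsq =>
      ⟨ne_of_lt (hps.trans hsq),
        sm, hsm, ⟨le_trans (min_le_left _ _) hps.le, le_trans hsq.le (le_max_right _ _)⟩⟩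
  have mid' : ∀ (sm p q : ℝ), sm ∈ Set.range t ∪ ({s1, s2} : Set ℝ) → q < sm → sm < p →
      p ≠ q ∧ ∃ u ∈ Set.range t ∪ ({s1, s2} : Set ℝ), u ∈ Set.Icc (min p q) (max p q) :=
    fun sm p q hsm hqs hsp =>
      ⟨(ne_of_lt (hqs.trans hsp)).symm,
        sm, hsm, ⟨le_trans (min_le_right _ _) hqs.le, le_trans hsp.le (le_max_left _ _)⟩⟩
  have hs1m : s1 ∈ Set.range t ∪ ({s1, s2} : Set ℝ) := Or.inr (Set.mem_insert _ _)
  have hs2m : s2 ∈ Set.range t ∪ ({s1, s2} : Set ℝ) :=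
    Or.inr (Set.mem_insert_of_mem _ rfl)
  have hj4 : j % 4 = 0 ∨ j % 4 = 1 ∨ j % 4 = 2 ∨ j % 4 = 3 := by omega
  have hk4 : k % 4 = 0 ∨ k % 4 = 1 ∨ k % 4 = 2 ∨ k % 4 = 3 := by omega
  rcases hj4 with h | h | h | h <;> rcases hk4 with h' | h' | h' | h' <;>
    simp only [cyc, h, h'] at hz hw <;> norm_num at hz hw
  · exact absurd (h.trans h'.symm) hjk
  · exact cross (hI11a hz) (hI21a hw)
  · exact mid s1 z w hs1m (hI11s z hz) (hI12s w hw)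
  · exact cross (hI11a hz) (hI22a hw)
  · exact cross' (hI21a hz) (hI11a hw)
  · exact absurd (h.trans h'.symm) hjk
  · exact cross' (hI21a hz) (hI12a hw)
  · exact mid s2 z w hs2m (hI21s z hz) (hI22s w hw)
  · exact mid' s1 z w hs1m (hI11s w hw) (hI12s z hz)
  · exact cross (hI12a hz) (hI21a hw)
  · exact absurd (h.trans h'.symm) hjk
  · exact cross (hI12a hz) (hI22a hw)
  · exact cross' (hI22a hz) (hI11a hw)
  · exact mid' s2 z w hs2m (hI21s w hw) (hI22s z hz)
  · exact cross' (hI22a hz) (hI12a hw)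
  · exact absurd (h.trans h'.symm) hjk

/-- one jump point added into each of two different intervals `I_{α₁}`,
`I_{α₂}`, with `σ` interchanging the two jump points and mapping the four open
subintervals in a single 4-cycle. Then `Sepⁿ_{𝒜_S} = Sepⁿ_𝒜 ∪ (I_{α₁}¹ ∪ I_{α₁}² ∪
I_{α₂}¹ ∪ I_{α₂}²)` if `4 ∤ n` and `Sepⁿ_{𝒜_S} = Sepⁿ_𝒜` if `4 ∣ n`; consequently
`𝒜_S' = 𝒜' \ {Σ fₙδⁿ : fₙ ≢ 0 on the union of the four subintervals for some n with
4 ∤ n}`. -/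
theorem statement19 (N : ℕ) (t : Fin N → ℝ) (ht : StrictMono t)
    (a1 a2 : ℕ) (ha1 : a1 ≤ N) (ha2 : a2 ≤ N) (ha12 : a1 ≠ a2)
    (s1 s2 : ℝ) (hs1 : s1 ∈ openPiece N t a1) (hs2 : s2 ∈ openPiece N t a2)
    (I11 I12 I21 I22 : Set ℝ)
    (hI11 : I11 = {x : ℝ | tE N t a1 < (x : EReal) ∧ x < s1})
    (hI12 : I12 = {x : ℝ | s1 < x ∧ (x : EReal) < tE N t (a1 + 1)})
    (hI21 : I21 = {x : ℝ | tE N t a2 < (x : EReal) ∧ x < s2})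
    (hI22 : I22 = {x : ℝ | s2 < x ∧ (x : EReal) < tE N t (a2 + 1)})
    (σ : Equiv.Perm ℝ)
    (h1 : AlgInvariant (pcAlgOn (Set.range t)) σ)
    (h2 : AlgInvariant (pcAlgOn (Set.range t)) σ.symm)
    (h3 : AlgInvariant (pcAlgOn (Set.range t ∪ {s1, s2})) σ)
    (h4 : AlgInvariant (pcAlgOn (Set.range t ∪ {s1, s2})) σ.symm)
    (hm0 : σ s1 = s2) (hm0' : σ s2 = s1)
    (hm1 : σ '' I11 = I21) (hm2 : σ '' I21 = I12)
    (hm3 : σ '' I12 = I22) (hm4 : σ '' I22 = I11) :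
    (∀ n : ℤ,
      (¬((4 : ℤ) ∣ n) →
        Sep (pcAlgOn (Set.range t ∪ {s1, s2})) σ n =
          Sep (pcAlgOn (Set.range t)) σ n ∪ (I11 ∪ I12 ∪ I21 ∪ I22)) ∧
      ((4 : ℤ) ∣ n →
        Sep (pcAlgOn (Set.range t ∪ {s1, s2})) σ n =
          Sep (pcAlgOn (Set.range t)) σ n)) ∧
    commutant (pcAlgOn (Set.range t ∪ {s1, s2})) (pcAlgOn (Set.range t ∪ {s1, s2})) σ =
      commutant (pcAlgOn (Set.range t)) (pcAlgOn (Set.range t ∪ {s1, s2})) σ \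
        {f : ℤ →₀ (ℝ → ℂ) | ∃ n : ℤ, ¬((4 : ℤ) ∣ n) ∧
          ¬(∀ x ∈ I11 ∪ I12 ∪ I21 ∪ I22, f n x = 0)} := by
  classical
  have hI11a : I11 ⊆ openPiece N t a1 := by
    rw [hI11]; rintro x ⟨h1, h2⟩
    exact ⟨h1, lt_trans (by exact_mod_cast h2) hs1.2⟩
  have hI12a : I12 ⊆ openPiece N t a1 := by
    rw [hI12]; rintro x ⟨h1, h2⟩
    exact ⟨lt_trans hs1.1 (by exact_mod_cast h1), h2⟩
  have hI21a : I21 ⊆ openPiece N t a2 := by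
    rw [hI21]; rintro x ⟨h1, h2⟩
    exact ⟨h1, lt_trans (by exact_mod_cast h2) hs2.2⟩
  have hI22a : I22 ⊆ openPiece N t a2 := by
    rw [hI22]; rintro x ⟨h1, h2⟩
    exact ⟨lt_trans hs2.1 (by exact_mod_cast h1), h2⟩
  have hI11s : ∀ z ∈ I11, z < s1 := by rw [hI11]; rintro z ⟨_, h⟩; exact h
  have hI12s : ∀ z ∈ I12, s1 < z := by rw [hI12]; rintro z ⟨h, _⟩; exact h
  have hI21s : ∀ z ∈ I21, z < s2 := by rw [hI21]; rintro z ⟨_, h⟩; exact h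
  have hI22s : ∀ z ∈ I22, s2 < z := by rw [hI22]; rintro z ⟨h, _⟩; exact h
  have hswap := swap_iter σ s1 s2 hm0 hm0'
  have hciter := cyc_iter I11 I21 I12 I22 σ hm1 hm2 hm3 hm4
  have hcsep : ∀ (j k : ℤ), j % 4 ≠ k % 4 → ∀ (z w : ℝ),
      z ∈ cyc I11 I21 I12 I22 j → w ∈ cyc I11 I21 I12 I22 k →
      z ≠ w ∧ ∃ u ∈ Set.range t ∪ ({s1, s2} : Set ℝ),
        u ∈ Set.Icc (min z w) (max z w) :=
    fun _ _ hjk _ _ hz hw => csep ht ha1 ha2 ha12 hI11a hI12a hI21a hI22a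
      hI11s hI12s hI21s hI22s hjk hz hw
  have hcdisj : ∀ (j k : ℤ), j % 4 ≠ k % 4 → ∀ z, z ∈ cyc I11 I21 I12 I22 j →
      z ∈ cyc I11 I21 I12 I22 k → False :=
    fun j k hjk z hz hk => (hcsep j k hjk z z hz hk).1 rfl
  have hcmem : ∀ (n m : ℤ) (z : ℝ), z ∈ cyc I11 I21 I12 I22 m →
      (σ ^ n) z ∈ cyc I11 I21 I12 I22 (m + n) :=
    fun n m z hz => (hciter n m) ▸ Set.mem_image_of_mem _ hz
  have hinvpow : ∀ (n : ℤ) (x : ℝ), (σ ^ n)⁻¹ x = (σ ^ (-n)) x := by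
    intro n x; rw [zpow_neg]
  have hc0 : cyc I11 I21 I12 I22 0 = I11 := by norm_num [cyc]
  have hc1 : cyc I11 I21 I12 I22 1 = I21 := by norm_num [cyc]
  have hc2 : cyc I11 I21 I12 I22 2 = I12 := by norm_num [cyc]
  have hc3 : cyc I11 I21 I12 I22 3 = I22 := by norm_num [cyc]
  have not_s : ∀ (n : ℤ) (x : ℝ), x ∉ Set.range t →
      (∀ u ∈ Set.range t, u ∉ Set.Icc (min x ((σ ^ n)⁻¹ x)) (max x ((σ ^ n)⁻¹ x))) →
      x ≠ (σ ^ n)⁻¹ x →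
      x ∉ ({s1, s2} : Set ℝ) ∧ (σ ^ n)⁻¹ x ∉ ({s1, s2} : Set ℝ) := by
    intro n x hx hno hxy
    have hxs : x ∉ ({s1, s2} : Set ℝ) := by
      intro hxm
      rcases hxm with hxm1 | hxm
      · have hy : (σ ^ n)⁻¹ x ∈ ({s1, s2} : Set ℝ) := by
          rw [hinvpow, hxm1]; exact (hswap (-n)).1
        rcases hy with hy | hy
        · exact hxy (hxm1.trans hy.symm)
        · rw [Set.mem_singleton_iff] at hy
          obtain ⟨_, u, hu, hI⟩ := sep_point ht ha1 ha2 ha12 hs1 hs2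
          rw [hy, hxm1] at hno
          exact hno u hu hI
      · rw [Set.mem_singleton_iff] at hxm
        have hy : (σ ^ n)⁻¹ x ∈ ({s1, s2} : Set ℝ) := by
          rw [hinvpow, hxm]; exact (hswap (-n)).2
        rcases hy with hy | hy
        · obtain ⟨_, u, hu, hI⟩ := sep_point ht ha2 ha1 (Ne.symm ha12) hs2 hs1
          rw [hy, hxm] at hno
          exact hno u hu hI
        · rw [Set.mem_singleton_iff] at hy
          exact hxy (hxm.trans hy.symm)
    refine ⟨hxs, ?_⟩
    intro hym
    apply hxs
    have hxe : x = (σ ^ n) ((σ ^ n)⁻¹ x) := ((σ ^ n).apply_symm_apply x).symm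
    rcases hym with hy | hy
    · rw [hxe, hy]; exact (hswap n).1
    · rw [Set.mem_singleton_iff] at hy
      rw [hxe, hy]; exact (hswap n).2
  have upgrade : ∀ (n : ℤ) (x : ℝ), Erel (Set.range t) x ((σ ^ n)⁻¹ x) →
      (∀ j j' : ℤ, j % 4 ≠ j' % 4 → x ∈ cyc I11 I21 I12 I22 j →
        (σ ^ n)⁻¹ x ∈ cyc I11 I21 I12 I22 j' → False) →
      Erel (Set.range t ∪ {s1, s2}) x ((σ ^ n)⁻¹ x) := by
    intro n x hET hblow
    rcases hET with heq | ⟨hx, hy, hno⟩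
    · exact Or.inl heq
    by_cases hxy : x = (σ ^ n)⁻¹ x
    · exact Or.inl hxy
    obtain ⟨hxs, hys⟩ := not_s n x hx hno hxy
    refine Or.inr ⟨?_, ?_, ?_⟩
    · rintro (h | h)
      · exact hx h
      · exact hxs h
    · rintro (h | h)
      · exact hy h
      · exact hys h
    · rintro u (hu | hu) hI
      · exact hno u hu hI
      · have hs1x : s1 ≠ x := fun h => hxs (by rw [← h]; exact Set.mem_insert _ _)
        have hs1y : s1 ≠ (σ ^ n)⁻¹ x :=
          fun h => hys (by rw [← h]; exact Set.mem_insert _ _)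
        have hs2x : s2 ≠ x :=
          fun h => hxs (by rw [← h]; exact Set.mem_insert_of_mem _ rfl)
        have hs2y : s2 ≠ (σ ^ n)⁻¹ x :=
          fun h => hys (by rw [← h]; exact Set.mem_insert_of_mem _ rfl)
        rcases hu with rfl | hu
        · rcases around_s ha1 hs1 hxy hno hs1x hs1y hI with ⟨hxI, hyI⟩ | ⟨hyI, hxI⟩
          · exact hblow 0 2 (by norm_num)
              (by rw [hc0, hI11]; exact hxI) (by rw [hc2, hI12]; exact hyI)
          · exact hblow 2 0 (by norm_num)
              (by rw [hc2, hI12]; exact hxI) (by rw [hc0, hI11]; exact hyI)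
        · rw [Set.mem_singleton_iff] at hu
          subst hu
          rcases around_s ha2 hs2 hxy hno hs2x hs2y hI with ⟨hxI, hyI⟩ | ⟨hyI, hxI⟩
          · exact hblow 1 3 (by norm_num)
              (by rw [hc1, hI21]; exact hxI) (by rw [hc3, hI22]; exact hyI)
          · exact hblow 3 1 (by norm_num)
              (by rw [hc3, hI22]; exact hxI) (by rw [hc1, hI21]; exact hyI)
  have hsub : ∀ n : ℤ, Sep (pcAlgOn (Set.range t)) σ n ⊆
      Sep (pcAlgOn (Set.range t ∪ {s1, s2})) σ n := by
    intro n x hx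
    rw [sep_iff] at hx ⊢
    exact fun hE => hx (erel_mono Set.subset_union_left hE)
  have main : ∀ n : ℤ,
      (¬ (4 : ℤ) ∣ n → Sep (pcAlgOn (Set.range t ∪ {s1, s2})) σ n =
          Sep (pcAlgOn (Set.range t)) σ n ∪ (I11 ∪ I12 ∪ I21 ∪ I22)) ∧
      ((4 : ℤ) ∣ n → Sep (pcAlgOn (Set.range t ∪ {s1, s2})) σ n =
          Sep (pcAlgOn (Set.range t)) σ n) := by
    intro n
    constructor
    · intro hn
      apply Set.Subset.antisymm
      · intro x hx
        by_cases hU : x ∈ I11 ∪ I12 ∪ I21 ∪ I22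
        · exact Or.inr hU
        left
        rw [sep_iff] at hx ⊢
        intro hET
        exact hx (upgrade n x hET
          (fun j j' _ hxj _ => hU (cyc_subU I11 I21 I12 I22 j x hxj)))
      · intro x hx
        rcases hx with hx | hxU
        · exact hsub n hx
        · have hxc : ∃ j : ℤ, x ∈ cyc I11 I21 I12 I22 j := by
            rcases hxU with ((h | h) | h) | h
            · exact ⟨0, by rw [hc0]; exact h⟩
            · exact ⟨2, by rw [hc2]; exact h⟩
            · exact ⟨1, by rw [hc1]; exact h⟩
            · exact ⟨3, by rw [hc3]; exact h⟩
          obtain ⟨j, hxj⟩ := hxc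
          rw [sep_iff]
          intro hE
          have hyj : (σ ^ n)⁻¹ x ∈ cyc I11 I21 I12 I22 (j + -n) := by
            rw [hinvpow]; exact hcmem (-n) j x hxj
          obtain ⟨hne, u, hu, hI⟩ :=
            hcsep j (j + -n) (show j % 4 ≠ (j + -n) % 4 by omega) x _ hxj hyj
          rcases hE with heq | ⟨_, _, hno⟩
          · exact hne heq
          · exact hno u hu hI
    · intro hdvd
      apply Set.Subset.antisymm _ (hsub n)
      intro x hx
      rw [sep_iff] at hx ⊢
      intro hET
      apply hx
      apply upgrade n x hET
      intro j j' hjj hxj hyj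
      have hy2 : (σ ^ n)⁻¹ x ∈ cyc I11 I21 I12 I22 (j + -n) := by
        rw [hinvpow]; exact hcmem (-n) j x hxj
      exact hcdisj (j + -n) j' (by omega) _ hy2 hyj
  refine ⟨fun n => main n, ?_⟩
  rw [commutant_eq, commutant_eq]
  ext f
  simp only [Set.mem_setOf_eq, Set.mem_diff]
  constructor
  · rintro ⟨hic, hsep⟩
    refine ⟨⟨hic, fun n x hx => hsep n x (hsub n hx)⟩, ?_⟩
    rintro ⟨nn, hn4, hbad⟩
    apply hbad
    intro x hxU
    exact hsep nn x (by rw [(main nn).1 hn4]; exact Or.inr hxU)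
  · rintro ⟨⟨hic, hsepA⟩, hnb⟩
    refine ⟨hic, fun n x hx => ?_⟩
    by_cases hdvd : (4 : ℤ) ∣ n
    · rw [(main n).2 hdvd] at hx
      exact hsepA n x hx
    · rw [(main n).1 hdvd] at hx
      rcases hx with hx | hxU
      · exact hsepA n x hx
      · by_contra hfz
        exact hnb ⟨n, hdvd, fun hall => hfz (hall x hxU)⟩


end PaperTRS
end
end
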